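/- arXiv:2204.04448 — 2 statements merged into one kernel-verified Lean document; each statement's English description precedes it below -/
import Mathlib

section
/- Let Q be a finite faithful left quasigroup and N ≤ Dis(Q) an admissible semiregular subgroup with α = O_N. Then α = c_N and N = Dis_α = {L_y L_x^{-1} : y ∈ [x]_α} for every x ∈ Q. -/
/-! Basic theory of left quasigroups, following the paper. -/

structure LeftQuasigroup (Q : Type*) where
  op : Q → Q → Q
  ld : Q → Q → Q
  op_ld : ∀ x y, op x (ld x y) = y
  ld_op : ∀ x y, ld x (op x y) = y

/-- Orbit relation of a subgroup of permutations. -/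
def orbRel {Q : Type*} (N : Subgroup (Equiv.Perm Q)) (x y : Q) : Prop := ∃ h ∈ N, h y = x

/-- Orbit equivalence relation of a subgroup of permutations. -/
def orbSetoid {Q : Type*} (N : Subgroup (Equiv.Perm Q)) : Setoid Q where
  r := orbRel N
  iseqv := by
    constructor
    · exact fun x => ⟨1, N.one_mem, rfl⟩
    · rintro x y ⟨h, hN, rfl⟩
      exact ⟨h⁻¹, N.inv_mem hN, Equiv.symm_apply_apply h y⟩
    · rintro x y z ⟨h, hN, rfl⟩ ⟨g, gN, rfl⟩
      exact ⟨h * g, N.mul_mem hN gN, rfl⟩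

/-- The subgroup of permutations moving every point inside its `α`-class. -/
def kerRel {Q : Type*} (α : Setoid Q) : Subgroup (Equiv.Perm Q) where
  carrier := {g | ∀ x, α.r (g x) x}
  one_mem' := fun x => α.refl x
  mul_mem' := by
    intro a b ha hb x
    exact α.trans (ha (b x)) (hb x)
  inv_mem' := by
    intro a ha x
    have := ha (a⁻¹ x)
    rw [← Equiv.Perm.mul_apply, mul_inv_cancel, Equiv.Perm.one_apply] at this
    exact α.symm this

/-- Pointwise stabilizer of `x` in `N`. -/
def pstab {Q : Type*} (N : Subgroup (Equiv.Perm Q)) (x : Q) : Subgroup (Equiv.Perm Q) :=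
  N ⊓ MulAction.stabilizer (Equiv.Perm Q) x

/-- Meet of a family of setoids. -/
def infSetoid {Q I : Type*} (α : I → Setoid Q) : Setoid Q where
  r x y := ∀ i, (α i).r x y
  iseqv := ⟨fun x i => (α i).refl x, fun h i => (α i).symm (h i),
    fun h g i => (α i).trans (h i) (g i)⟩

namespace LeftQuasigroup

variable {Q : Type*} (S : LeftQuasigroup Q)

/-- Left translation as a permutation. -/
def L (x : Q) : Equiv.Perm Q := ⟨S.op x, S.ld x, S.ld_op x, S.op_ld x⟩

/-- The left multiplication group. -/
def LMlt : Subgroup (Equiv.Perm Q) := Subgroup.closure (Set.range S.L)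

/-- The displacement group relative to a binary relation `r`. -/
def disRel (r : Q → Q → Prop) : Subgroup (Equiv.Perm Q) :=
  Subgroup.closure {g | ∃ h ∈ S.LMlt, ∃ x y, r x y ∧ g = h * (S.L x * (S.L y)⁻¹) * h⁻¹}

/-- The displacement group. -/
def Dis : Subgroup (Equiv.Perm Q) := S.disRel fun _ _ => True

/-- `Dis^α`. -/
def disUp (α : Setoid Q) : Subgroup (Equiv.Perm Q) := S.Dis ⊓ kerRel α

/-- `LMlt^α`, the kernel of `π_α`. -/
def lmltKer (α : Setoid Q) : Subgroup (Equiv.Perm Q) := S.LMlt ⊓ kerRel α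

/-- Congruences of a left quasigroup. -/
structure IsCongruence (α : Setoid Q) : Prop where
  op_compat : ∀ {x y z w : Q}, α.r x y → α.r z w → α.r (S.op x z) (S.op y w)
  ld_compat : ∀ {x y z w : Q}, α.r x y → α.r z w → α.r (S.ld x z) (S.ld y w)

theorem L_mem_lmlt (x : Q) : S.L x ∈ S.LMlt := Subgroup.subset_closure ⟨x, rfl⟩

theorem disRel_le_lmlt (r : Q → Q → Prop) : S.disRel r ≤ S.LMlt := by
  refine (Subgroup.closure_le _).2 ?_
  rintro g ⟨h, hh, x, y, _, rfl⟩
  exact mul_mem (mul_mem hh (mul_mem (S.L_mem_lmlt x) (inv_mem (S.L_mem_lmlt y)))) (inv_mem hh)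

theorem lmlt_maps {α : Setoid Q} (hα : S.IsCongruence α) {g : Equiv.Perm Q}
    (hg : g ∈ S.LMlt) : ∀ x y, α.r x y → α.r (g x) (g y) := by
  have H : ∀ g ∈ S.LMlt,
      (∀ x y, α.r x y → α.r (g x) (g y)) ∧ (∀ x y, α.r x y → α.r (g⁻¹ x) (g⁻¹ y)) := by
    intro g hg
    induction hg using Subgroup.closure_induction with
    | mem g hgen =>
      obtain ⟨z, rfl⟩ := hgen
      constructor
      · intro x y h; exact hα.op_compat (α.refl z) h
      · intro x y h; exact hα.ld_compat (α.refl z) h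
    | one =>
      constructor <;> intro x y h <;> simpa using h
    | mul a b _ _ ha hb =>
      constructor
      · intro x y h
        exact ha.1 _ _ (hb.1 _ _ h)
      · intro x y h
        have := hb.2 _ _ (ha.2 _ _ h)
        simpa [mul_inv_rev] using this
    | inv a _ ha =>
      refine ⟨ha.2, ?_⟩
      intro x y h
      simpa using ha.1 x y h
  exact (H g hg).1

/-- The blockwise stabilizer `Dis(Q)_{[x]_α}`. -/
def blockStab (α : Setoid Q) (hα : S.IsCongruence α) (x : Q) : Subgroup (Equiv.Perm Q) where
  carrier := {g | g ∈ S.Dis ∧ α.r (g x) x}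
  one_mem' := ⟨S.Dis.one_mem, α.refl x⟩
  mul_mem' := by
    intro a b ha hb
    refine ⟨S.Dis.mul_mem ha.1 hb.1, ?_⟩
    exact α.trans (S.lmlt_maps hα (S.disRel_le_lmlt _ ha.1) _ _ hb.2) ha.2
  inv_mem' := by
    intro a ha
    refine ⟨S.Dis.inv_mem ha.1, ?_⟩
    have h2 := S.lmlt_maps hα (inv_mem (S.disRel_le_lmlt _ ha.1)) _ _ ha.2
    rw [← Equiv.Perm.mul_apply, inv_mul_cancel, Equiv.Perm.one_apply] at h2
    exact α.symm h2

/-- The admissible subgroups `Norm(Q)`. -/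
def Norm : Set (Subgroup (Equiv.Perm Q)) :=
  {N | N ≤ S.LMlt ∧ (∀ h ∈ S.LMlt, ∀ n ∈ N, h * n * h⁻¹ ∈ N) ∧ S.disRel (orbRel N) ≤ N}

/-- Image of a subgroup along the canonical projection `π_α`. -/
def piSub (α : Setoid Q) (N : Subgroup (Equiv.Perm Q)) : Subgroup (Equiv.Perm (Quotient α)) where
  carrier := {k | ∃ h ∈ N, ∀ x : Q, k (Quotient.mk α x) = Quotient.mk α (h x)}
  one_mem' := ⟨1, N.one_mem, fun _ => rfl⟩
  mul_mem' := by
    rintro a b ⟨ha, haN, hae⟩ ⟨hb, hbN, hbe⟩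
    refine ⟨ha * hb, N.mul_mem haN hbN, fun x => ?_⟩
    show a (b (Quotient.mk α x)) = _
    rw [hbe, hae]; rfl
  inv_mem' := by
    rintro a ⟨h, hN, he⟩
    refine ⟨h⁻¹, N.inv_mem hN, fun x => ?_⟩
    have h1 := he (h⁻¹ x)
    rw [← Equiv.Perm.mul_apply, mul_inv_cancel, Equiv.Perm.one_apply] at h1
    rw [← h1, ← Equiv.Perm.mul_apply, inv_mul_cancel, Equiv.Perm.one_apply]

/-- Preimage of a subgroup along the canonical projection `π_α`. -/
def piPre (α : Setoid Q) (K : Subgroup (Equiv.Perm (Quotient α))) : Subgroup (Equiv.Perm Q) where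
  carrier := {h | h ∈ S.LMlt ∧ ∃ k ∈ K, ∀ x : Q, k (Quotient.mk α x) = Quotient.mk α (h x)}
  one_mem' := ⟨S.LMlt.one_mem, 1, K.one_mem, fun _ => rfl⟩
  mul_mem' := by
    rintro a b ⟨haL, ka, kaK, hae⟩ ⟨hbL, kb, kbK, hbe⟩
    refine ⟨S.LMlt.mul_mem haL hbL, ka * kb, K.mul_mem kaK kbK, fun x => ?_⟩
    show ka (kb (Quotient.mk α x)) = _
    rw [hbe, hae]; rfl
  inv_mem' := by
    rintro a ⟨haL, k, kK, he⟩
    refine ⟨S.LMlt.inv_mem haL, k⁻¹, K.inv_mem kK, fun x => ?_⟩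
    have h1 := he (a⁻¹ x)
    rw [← Equiv.Perm.mul_apply, mul_inv_cancel, Equiv.Perm.one_apply] at h1
    rw [← h1, ← Equiv.Perm.mul_apply, inv_mul_cancel, Equiv.Perm.one_apply]

/-- Quotient left quasigroup. -/
def quotLQ (α : Setoid Q) (hα : S.IsCongruence α) : LeftQuasigroup (Quotient α) where
  op := Quotient.lift₂ (fun x y => Quotient.mk α (S.op x y))
    (fun _ _ _ _ h1 h2 => Quotient.sound (hα.op_compat h1 h2))
  ld := Quotient.lift₂ (fun x y => Quotient.mk α (S.ld x y))
    (fun _ _ _ _ h1 h2 => Quotient.sound (hα.ld_compat h1 h2))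
  op_ld := fun a b => Quotient.inductionOn₂ a b fun x y => congrArg (Quotient.mk α) (S.op_ld x y)
  ld_op := fun a b => Quotient.inductionOn₂ a b fun x y => congrArg (Quotient.mk α) (S.ld_op x y)

/-- Idempotent left quasigroup. -/
def Idem : Prop := ∀ x : Q, S.op x x = x

/-- Left distributive law (defining quandles among idempotent left quasigroups). -/
def Ldist : Prop := ∀ x y z : Q, S.op x (S.op y z) = S.op (S.op x y) (S.op x z)

/-- A left quasigroup is faithful if the Cayley kernel is trivial. -/
def Faithful : Prop := ∀ x y : Q, (∀ z, S.op x z = S.op y z) → x = y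

/-- Connected: `LMlt` acts transitively. -/
def Connected : Prop := ∀ x y : Q, ∃ h ∈ S.LMlt, h y = x

/-- Semiregular: `Dis` acts with trivial stabilizers. -/
def Semiregular : Prop := ∀ g ∈ S.Dis, ∀ x : Q, g x = x → g = 1

/-- Subalgebras. -/
def IsSubalgebra (A : Set Q) : Prop :=
  ∀ ⦃x⦄, x ∈ A → ∀ ⦃y⦄, y ∈ A → S.op x y ∈ A ∧ S.ld x y ∈ A

/-- The left quasigroup structure on a subalgebra. -/
def subLQ (A : Set Q) (hA : S.IsSubalgebra A) : LeftQuasigroup A where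
  op a b := ⟨S.op a b, (hA a.2 b.2).1⟩
  ld a b := ⟨S.ld a b, (hA a.2 b.2).2⟩
  op_ld a b := Subtype.ext (S.op_ld a b)
  ld_op a b := Subtype.ext (S.ld_op a b)

/-- Superconnected: every subalgebra is connected. -/
def Superconnected : Prop := ∀ (A : Set Q) (hA : S.IsSubalgebra A), (S.subLQ A hA).Connected

/-- Superfaithful: every subalgebra is faithful. -/
def Superfaithful : Prop := ∀ (A : Set Q) (hA : S.IsSubalgebra A), (S.subLQ A hA).Faithful

theorem infCong {I : Type*} {α : I → Setoid Q} (hc : ∀ i, S.IsCongruence (α i)) :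
    S.IsCongruence (infSetoid α) :=
  ⟨fun h1 h2 i => (hc i).op_compat (h1 i) (h2 i),
   fun h1 h2 i => (hc i).ld_compat (h1 i) (h2 i)⟩

end LeftQuasigroup

/-- Terms in the language of left quasigroups in `n` variables. -/
inductive LQTerm : ℕ → Type
  | var : ∀ {n}, Fin n → LQTerm n
  | op : ∀ {n}, LQTerm n → LQTerm n → LQTerm n
  | ld : ∀ {n}, LQTerm n → LQTerm n → LQTerm n

/-- Evaluation of terms. -/
def evalT {Q : Type*} (S : LeftQuasigroup Q) : ∀ {n}, LQTerm n → (Fin n → Q) → Q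
  | _, .var i, v => v i
  | _, .op t s, v => S.op (evalT S t v) (evalT S s v)
  | _, .ld t s, v => S.ld (evalT S t v) (evalT S s v)

/-- The centralizing relation `C(a, b; d)` of commutator theory. -/
def CC {Q : Type*} (S : LeftQuasigroup Q) (a b d : Q → Q → Prop) : Prop :=
  ∀ (n : ℕ) (t : LQTerm (n + 1)) (x y : Q) (z u : Fin n → Q),
    a x y → (∀ i, b (z i) (u i)) →
    d (evalT S t (Fin.cons x z)) (evalT S t (Fin.cons x u)) →
    d (evalT S t (Fin.cons y z)) (evalT S t (Fin.cons y u))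

/-- Nilpotency of length `n` in the sense of commutator theory: the ascending central
series (characterized congruence by congruence) reaches the full congruence at step `n`. -/
def LeftQuasigroup.NilpotentLength {Q : Type*} (S : LeftQuasigroup Q) (n : ℕ) : Prop :=
  ∃ c : ℕ → Setoid Q,
    (∀ k, S.IsCongruence (c k)) ∧
    (∀ x y : Q, (c 0).r x y ↔ x = y) ∧
    (∀ k, ∀ β : Setoid Q, S.IsCongruence β →
      (CC S β.r (fun _ _ => True) (c k).r ↔ β ≤ c (k + 1))) ∧
    (∀ x y : Q, (c n).r x y)


/-! For a semiregular `N`, the map `n ↦ L_{n x} L_x⁻¹` is an injection `N → N`: by faithfulness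
`L_{n x}` determines `n x`, and by semiregularity `n x` determines `n`. On a finite set it is
therefore a bijection, so every element of `N` is a displacement `L_y L_x⁻¹` with `y ∈ [x]_{O_N}`.
This gives `O_N = c_N`, and `N = Dis_{O_N}` because admissibility provides the other inclusion. -/

namespace Subgroup

theorem eq_of_apply_eq_of_semiregular {Q : Type*} {N : Subgroup (Equiv.Perm Q)}
    (hsemi : ∀ g ∈ N, ∀ x : Q, g x = x → g = 1) {a b : Equiv.Perm Q} (ha : a ∈ N) (hb : b ∈ N)
    {x : Q} (hab : a x = b x) : a = b := by
  have hfix : (b⁻¹ * a) x = x := by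
    rw [Equiv.Perm.mul_apply, hab, ← Equiv.Perm.mul_apply, inv_mul_cancel, Equiv.Perm.one_apply]
  exact (inv_mul_eq_one.mp (hsemi _ (N.mul_mem (N.inv_mem hb) ha) x hfix)).symm

end Subgroup

namespace LeftQuasigroup

variable {Q : Type*} (S : LeftQuasigroup Q)

theorem L_injective (hf : S.Faithful) : Function.Injective S.L :=
  fun x y h => hf x y fun z => congrArg (· z) h

theorem L_mul_L_inv_mem_disRel {r : Q → Q → Prop} {x y : Q} (hxy : r x y) :
    S.L x * (S.L y)⁻¹ ∈ S.disRel r :=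
  Subgroup.subset_closure ⟨1, S.LMlt.one_mem, x, y, hxy, by group⟩

theorem L_mul_L_inv_mem_of_orbRel {N : Subgroup (Equiv.Perm Q)} (hN : N ∈ S.Norm) {x y : Q}
    (hxy : orbRel N x y) : S.L x * (S.L y)⁻¹ ∈ N :=
  hN.2.2 (S.L_mul_L_inv_mem_disRel hxy)

def displacement {N : Subgroup (Equiv.Perm Q)} (hN : N ∈ S.Norm) (x : Q) : N → N :=
  fun n => ⟨S.L (n.1 x) * (S.L x)⁻¹, S.L_mul_L_inv_mem_of_orbRel hN ⟨n.1, n.2, rfl⟩⟩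

theorem displacement_injective (hf : S.Faithful) {N : Subgroup (Equiv.Perm Q)} (hN : N ∈ S.Norm)
    (hsemi : ∀ g ∈ N, ∀ x : Q, g x = x → g = 1) (x : Q) :
    Function.Injective (S.displacement hN x) := by
  intro a b hab
  have hL : S.L (a.1 x) = S.L (b.1 x) := mul_right_cancel (congrArg Subtype.val hab)
  exact Subtype.ext (Subgroup.eq_of_apply_eq_of_semiregular hsemi a.2 b.2 (S.L_injective hf hL))

theorem exists_orbRel_eq_L_mul_L_inv [Finite Q] (hf : S.Faithful) {N : Subgroup (Equiv.Perm Q)}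
    (hN : N ∈ S.Norm) (hsemi : ∀ g ∈ N, ∀ x : Q, g x = x → g = 1) (x : Q) {g : Equiv.Perm Q}
    (hg : g ∈ N) : ∃ y, orbRel N y x ∧ g = S.L y * (S.L x)⁻¹ := by
  obtain ⟨n, hn⟩ :=
    Finite.injective_iff_surjective.mp (S.displacement_injective hf hN hsemi x) ⟨g, hg⟩
  exact ⟨n.1 x, ⟨n.1, n.2, rfl⟩, (congrArg Subtype.val hn).symm⟩

end LeftQuasigroup

theorem stmt14_general {Q : Type*} [Finite Q] (S : LeftQuasigroup Q) (hf : S.Faithful)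
    (N : Subgroup (Equiv.Perm Q)) (hN : N ∈ S.Norm)
    (hsemi : ∀ g ∈ N, ∀ x : Q, g x = x → g = 1) :
    (∀ x y : Q, orbRel N x y ↔ S.L x * (S.L y)⁻¹ ∈ N) ∧
    N = S.disRel (orbRel N) ∧
    ∀ x : Q, (N : Set (Equiv.Perm Q)) = {g | ∃ y, orbRel N y x ∧ g = S.L y * (S.L x)⁻¹} := by
  have hdisp := S.exists_orbRel_eq_L_mul_L_inv hf hN hsemi
  refine ⟨fun x y => ⟨S.L_mul_L_inv_mem_of_orbRel hN, fun hxy => ?_⟩, ?_, fun x => ?_⟩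
  · obtain ⟨z, hzy, hL⟩ := hdisp y hxy
    rwa [S.L_injective hf (mul_right_cancel hL)]
  · refine le_antisymm (fun g hg => ?_) hN.2.2
    rcases isEmpty_or_nonempty Q with _ | ⟨⟨x⟩⟩
    · rw [Subsingleton.elim g 1]
      exact one_mem _
    · obtain ⟨y, hyx, rfl⟩ := hdisp x hg
      exact S.L_mul_L_inv_mem_disRel hyx
  · ext g
    exact ⟨hdisp x, fun ⟨y, hyx, hg⟩ => hg ▸ S.L_mul_L_inv_mem_of_orbRel hN hyx⟩

/-- for a finite faithful `Q` and semiregular admissible `N ≤ Dis(Q)`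
with `α = O_N`: `α = c_N` and `N = Dis_α = {L_y L_x⁻¹ : y ∈ [x]_α}` for every `x`. -/
theorem stmt14 {Q : Type*} [Finite Q] (S : LeftQuasigroup Q) (hf : S.Faithful)
    (N : Subgroup (Equiv.Perm Q)) (hN : N ∈ S.Norm) (hle : N ≤ S.Dis)
    (hsemi : ∀ g ∈ N, ∀ x : Q, g x = x → g = 1) :
    (∀ x y : Q, orbRel N x y ↔ S.L x * (S.L y)⁻¹ ∈ N) ∧
    N = S.disRel (orbRel N) ∧
    ∀ x : Q, (N : Set (Equiv.Perm Q)) = {g | ∃ y, orbRel N y x ∧ g = S.L y * (S.L x)⁻¹} :=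
  stmt14_general S hf N hN hsemi
end

section
/- Let Q be a superconnected idempotent left quasigroup. If Q is nilpotent of length n, then Dis(Q) is solvable of derived length at most n. -/
/-! Along the ascending central series `0 = ζ₀ ≤ ⋯ ≤ ζₙ = 1`, the `k`-th derived subgroup of
`Dis(Q)` lies in `Dis^{ζ_{n-k}}`, since `⁅Dis^β, Dis^β⁆ ≤ Dis^γ` whenever `C(β, 1; γ)`.
For the latter let `g, h ∈ Dis^β`. Superconnectedness and idempotence give `β = O_{Dis_β}`,
so `h v = e v` for some `e ∈ Dis_β`. Centrality makes `g e g⁻¹` and `e` agree modulo `γ`,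
and makes `h⁻¹ e`, which fixes `v`, fix `g v` modulo `γ`; together `g h v ≡_γ h g v`. -/

theorem map_subtype_derivedSeries_le_of_commutator_le {G : Type*} [Group G] (H : Subgroup G)
    (A : ℕ → Subgroup G) (hA : ∀ k, ⁅A (k + 1), A (k + 1)⁆ ≤ A k) (m k : ℕ)
    (hH : H ≤ A (m + k)) : (derivedSeries H m).map H.subtype ≤ A k := by
  induction m generalizing k with
  | zero =>
    rw [derivedSeries_zero, ← MonoidHom.range_eq_map, Subgroup.range_subtype]
    simpa using hH
  | succ m ih =>
    rw [derivedSeries_succ, Subgroup.map_commutator]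
    have hm := ih (k + 1) (by rwa [add_right_comm] at hH)
    exact (Subgroup.commutator_mono hm hm).trans (hA k)

def LQTerm.rename : ∀ {n m : ℕ}, (Fin n → Fin m) → LQTerm n → LQTerm m
  | _, _, f, .var i => .var (f i)
  | _, _, f, .op t s => .op (t.rename f) (s.rename f)
  | _, _, f, .ld t s => .ld (t.rename f) (s.rename f)

theorem evalT_rename {Q : Type*} (S : LeftQuasigroup Q) {n m : ℕ} (f : Fin n → Fin m)
    (t : LQTerm n) (v : Fin m → Q) : evalT S (t.rename f) v = evalT S t (v ∘ f) := by
  induction t with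
  | var i => simp only [LQTerm.rename, evalT, Function.comp_apply]
  | op t s iht ihs => simp only [LQTerm.rename, evalT, iht, ihs]
  | ld t s iht ihs => simp only [LQTerm.rename, evalT, iht, ihs]

theorem Fin.cons_append_comp_cons_castAdd {α : Type*} {k₁ k₂ : ℕ} (y : α) (z₁ : Fin k₁ → α)
    (z₂ : Fin k₂ → α) :
    Fin.cons y (Fin.append z₁ z₂) ∘ Fin.cons 0 (Fin.succ ∘ Fin.castAdd k₂) = Fin.cons y z₁ := by
  ext i
  cases i using Fin.cases <;> simp

theorem Fin.cons_append_comp_cons_natAdd {α : Type*} {k₁ k₂ : ℕ} (y : α) (z₁ : Fin k₁ → α)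
    (z₂ : Fin k₂ → α) :
    Fin.cons y (Fin.append z₁ z₂) ∘ Fin.cons 0 (Fin.succ ∘ Fin.natAdd k₁) = Fin.cons y z₂ := by
  ext i
  cases i using Fin.cases <;> simp

namespace LeftQuasigroup

variable {Q : Type*} {S : LeftQuasigroup Q} {β γ : Setoid Q}

variable (S) in
/-- `F` and `G` are the unary polynomial functions `t(·, z̄)` and `t(·, ū)` of one term `t`
with two parameter tuples: exactly the pairs compared by the centrality condition `CC`. -/
def PolyPair (F G : Q → Q) : Prop :=
  ∃ (k : ℕ) (t : LQTerm (k + 1)) (z u : Fin k → Q),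
    ∀ y, F y = evalT S t (Fin.cons y z) ∧ G y = evalT S t (Fin.cons y u)

theorem polyPair_id : S.PolyPair id id :=
  ⟨0, .var 0, Fin.elim0, Fin.elim0, fun _ => by simp [evalT]⟩

theorem polyPair_const (a b : Q) : S.PolyPair (fun _ => a) (fun _ => b) :=
  ⟨1, .var 1, ![a], ![b], fun _ => by simp [evalT]⟩

theorem PolyPair.exists_common_term {F G F' G' : Q → Q} (h : S.PolyPair F G)
    (h' : S.PolyPair F' G') :
    ∃ (k : ℕ) (t t' : LQTerm (k + 1)) (z u : Fin k → Q), ∀ y,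
      F y = evalT S t (Fin.cons y z) ∧ G y = evalT S t (Fin.cons y u) ∧
      F' y = evalT S t' (Fin.cons y z) ∧ G' y = evalT S t' (Fin.cons y u) := by
  obtain ⟨k₁, t₁, z₁, u₁, h₁⟩ := h
  obtain ⟨k₂, t₂, z₂, u₂, h₂⟩ := h'
  refine ⟨k₁ + k₂, t₁.rename (Fin.cons 0 (Fin.succ ∘ Fin.castAdd k₂)),
    t₂.rename (Fin.cons 0 (Fin.succ ∘ Fin.natAdd k₁)), Fin.append z₁ z₂, Fin.append u₁ u₂,
    fun y => ?_⟩
  simp only [evalT_rename, Fin.cons_append_comp_cons_castAdd, Fin.cons_append_comp_cons_natAdd]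
  exact ⟨(h₁ y).1, (h₁ y).2, (h₂ y).1, (h₂ y).2⟩

theorem PolyPair.op {F G F' G' : Q → Q} (h : S.PolyPair F G) (h' : S.PolyPair F' G') :
    S.PolyPair (fun y => S.op (F y) (F' y)) (fun y => S.op (G y) (G' y)) := by
  obtain ⟨k, t, t', z, u, H⟩ := h.exists_common_term h'
  exact ⟨k, .op t t', z, u, fun y => by simp only [evalT, H y, and_self]⟩

theorem PolyPair.ld {F G F' G' : Q → Q} (h : S.PolyPair F G) (h' : S.PolyPair F' G') :
    S.PolyPair (fun y => S.ld (F y) (F' y)) (fun y => S.ld (G y) (G' y)) := by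
  obtain ⟨k, t, t', z, u, H⟩ := h.exists_common_term h'
  exact ⟨k, .ld t t', z, u, fun y => by simp only [evalT, H y, and_self]⟩

theorem PolyPair.transfer {a d : Q → Q → Prop} (hcc : CC S a (fun _ _ => True) d)
    {F G : Q → Q} (h : S.PolyPair F G) {x y : Q} (hxy : a x y) (hx : d (F x) (G x)) :
    d (F y) (G y) := by
  obtain ⟨k, t, z, u, H⟩ := h
  rw [(H x).1, (H x).2] at hx
  rw [(H y).1, (H y).2]
  exact hcc k t x y z u hxy (fun _ => trivial) hx

theorem L_inv_apply (x y : Q) : (S.L x)⁻¹ y = S.ld x y := rfl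

theorem ld_self (hi : S.Idem) (x : Q) : S.ld x x = x := by
  have h := S.ld_op x x
  rwa [hi x] at h

theorem mem_disRel {r : Q → Q → Prop} {h : Equiv.Perm Q} (hh : h ∈ S.LMlt) {x y : Q}
    (hxy : r x y) : h * (S.L x * (S.L y)⁻¹) * h⁻¹ ∈ S.disRel r :=
  Subgroup.subset_closure ⟨h, hh, x, y, hxy, rfl⟩

theorem disRel_le_dis (r : Q → Q → Prop) : S.disRel r ≤ S.Dis :=
  Subgroup.closure_mono fun _ ⟨h, hh, x, y, _, hg⟩ => ⟨h, hh, x, y, trivial, hg⟩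

theorem disRel_induction {r : Q → Q → Prop} (hr : ∀ ⦃x y⦄, r x y → r y x)
    {p : (g : Equiv.Perm Q) → g ∈ S.disRel r → Prop}
    (gen : ∀ h (hh : h ∈ S.LMlt) x y (hxy : r x y), p _ (mem_disRel hh hxy))
    (one : p 1 (one_mem _))
    (mul : ∀ f g hf hg, p f hf → p g hg → p (f * g) (mul_mem hf hg))
    {g : Equiv.Perm Q} (hg : g ∈ S.disRel r) : p g hg := by
  induction hg using Subgroup.closure_induction'' with
  | mem _ hg =>
    obtain ⟨h, hh, x, y, hxy, rfl⟩ := hg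
    exact gen h hh x y hxy
  | inv_mem _ hg =>
    obtain ⟨h, hh, x, y, hxy, rfl⟩ := hg
    convert gen h hh y x (hr hxy) using 1
    group
  | one => exact one
  | mul f g hf hg pf pg => exact mul f g hf hg pf pg

theorem PolyPair.comp_lmlt {g : Equiv.Perm Q} (hg : g ∈ S.LMlt) {F G : Q → Q}
    (h : S.PolyPair F G) : S.PolyPair (g ∘ F) (g ∘ G) := by
  induction hg using Subgroup.closure_induction'' generalizing F G with
  | mem _ hg =>
    obtain ⟨a, rfl⟩ := hg
    exact (polyPair_const a a).op h
  | inv_mem _ hg =>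
    obtain ⟨a, rfl⟩ := hg
    exact (polyPair_const a a).ld h
  | one => exact h
  | mul f g _ _ pf pg => exact pf (pg h)

theorem PolyPair.comp_dis {f : Equiv.Perm Q} (hf : f ∈ S.Dis) {F G : Q → Q}
    (h : S.PolyPair F G) : S.PolyPair (f ∘ F) G := by
  induction hf using disRel_induction generalizing F G with
  | hr => trivial
  | gen k hk x y _ =>
    have H := ((polyPair_const x y).op
      ((h.comp_lmlt (inv_mem hk)).comp_lmlt (inv_mem (S.L_mem_lmlt y)))).comp_lmlt hk
    convert H using 1
    · rfl
    · funext w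
      simp only [Function.comp_apply]
      rw [L_inv_apply, S.op_ld, Equiv.Perm.coe_inv, Equiv.apply_symm_apply]
  | one => exact h
  | mul f g _ _ pf pg => exact pf (pg h)

theorem mem_disUp {g : Equiv.Perm Q} : g ∈ S.disUp β ↔ g ∈ S.Dis ∧ ∀ x, β.r (g x) x := Iff.rfl

theorem rel_conj_apply (hγ : S.IsCongruence γ) (hcc : CC S β.r (fun _ _ => True) γ.r)
    {f : Equiv.Perm Q} (hf : f ∈ S.Dis) {g : Equiv.Perm Q} (hg : g ∈ S.disRel β.r) (u : Q) :
    γ.r (f (g (f⁻¹ u))) (g u) := by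
  induction hg using disRel_induction generalizing u with
  | hr => exact β.symm ‹_›
  | gen k hk x y hxy =>
    have H : S.PolyPair (fun w => f (k (S.op w (S.ld y (k⁻¹ (f⁻¹ u))))))
        (fun w => k (S.op w (S.ld y (k⁻¹ u)))) :=
      ((polyPair_id.op (((polyPair_const (f⁻¹ u) u).comp_lmlt (inv_mem hk)).comp_lmlt
        (inv_mem (S.L_mem_lmlt y)))).comp_lmlt hk).comp_dis hf
    -- at `w = y` both sides collapse to `u`
    refine H.transfer hcc (β.symm hxy) ?_
    simp only [S.op_ld, Equiv.Perm.coe_inv, Equiv.apply_symm_apply]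
    exact γ.refl u
  | one =>
    simp only [Equiv.Perm.one_apply, Equiv.Perm.coe_inv, Equiv.apply_symm_apply]
    exact γ.refl u
  | mul g₁ g₂ hg₁ _ ih₁ ih₂ =>
    have hconj : f * g₁ * f⁻¹ ∈ S.LMlt :=
      mul_mem (mul_mem (S.disRel_le_lmlt _ hf) (S.disRel_le_lmlt _ hg₁))
        (inv_mem (S.disRel_le_lmlt _ hf))
    have h₁ := S.lmlt_maps hγ hconj _ _ (ih₂ u)
    simp only [Equiv.Perm.mul_apply, Equiv.Perm.coe_inv, Equiv.symm_apply_apply] at h₁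
    exact γ.trans h₁ (ih₁ (g₂ u))

theorem rel_apply_self_of_rel (hcc : CC S β.r (fun _ _ => True) γ.r) {f : Equiv.Perm Q}
    (hf : f ∈ S.Dis) {x y : Q} (hxy : β.r x y) (hx : γ.r (f x) x) : γ.r (f y) y :=
  (polyPair_id.comp_dis hf).transfer hcc hxy hx

theorem isSubalgebra_setOf_rel (hi : S.Idem) (hβ : S.IsCongruence β) (y : Q) :
    S.IsSubalgebra {z | β.r z y} := by
  intro z hz w hw
  have hop := hβ.op_compat hz hw
  have hld := hβ.ld_compat hz hw
  rw [hi y] at hop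
  rw [ld_self hi y] at hld
  exact ⟨hop, hld⟩

-- Idempotence makes `L_w` fix `w`, so `L_a w = (L_a L_w⁻¹) w`.
theorem exists_disRel_apply_eq_op (hi : S.Idem) {r : Q → Q → Prop} {a w : Q} (haw : r a w) :
    ∃ g ∈ S.disRel r, g w = S.op a w := by
  refine ⟨S.L a * (S.L w)⁻¹, by simpa using mem_disRel S.LMlt.one_mem haw, ?_⟩
  show S.op a (S.ld w w) = S.op a w
  rw [ld_self hi]

theorem exists_disRel_apply_eq_ld (hi : S.Idem) {r : Q → Q → Prop} {a w : Q} (hwa : r w a) :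
    ∃ g ∈ S.disRel r, g w = S.ld a w := by
  refine ⟨_, mem_disRel (inv_mem (S.L_mem_lmlt a)) hwa, ?_⟩
  show S.ld a (S.op w (S.ld a (S.op a w))) = S.ld a w
  rw [S.ld_op, hi]

theorem exists_disRel_apply_eq (hi : S.Idem) (hsc : S.Superconnected)
    (hβ : S.IsCongruence β) {x y : Q} (hxy : β.r x y) :
    ∃ e ∈ S.disRel β.r, e y = x := by
  have hA := isSubalgebra_setOf_rel hi hβ y
  have H : ∀ h ∈ (S.subLQ _ hA).LMlt, ∀ z : {z | β.r z y}, (∃ e ∈ S.disRel β.r, e y = z) →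
      ∃ e ∈ S.disRel β.r, e y = h z := by
    intro h hh
    induction hh using Subgroup.closure_induction'' with
    | mem _ ha =>
      obtain ⟨a, rfl⟩ := ha
      rintro z ⟨e, he, hez⟩
      obtain ⟨g, hg, hgz⟩ := exists_disRel_apply_eq_op hi (β.trans a.2 (β.symm z.2))
      exact ⟨g * e, mul_mem hg he, by rw [Equiv.Perm.mul_apply, hez, hgz]; rfl⟩
    | inv_mem _ ha =>
      obtain ⟨a, rfl⟩ := ha
      rintro z ⟨e, he, hez⟩
      obtain ⟨g, hg, hgz⟩ := exists_disRel_apply_eq_ld hi (β.trans z.2 (β.symm a.2))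
      exact ⟨g * e, mul_mem hg he, by rw [Equiv.Perm.mul_apply, hez, hgz]; rfl⟩
    | one => exact fun _ hz => hz
    | mul f g _ _ hf hg => exact fun z hz => hf _ (hg z hz)
  obtain ⟨h, hh, hhy⟩ := hsc _ hA ⟨x, hxy⟩ ⟨y, β.refl y⟩
  simpa [hhy] using H h hh ⟨y, β.refl y⟩ ⟨1, one_mem _, rfl⟩

theorem rel_apply_apply_comm (hi : S.Idem) (hsc : S.Superconnected) (hβ : S.IsCongruence β)
    (hγ : S.IsCongruence γ) (hcc : CC S β.r (fun _ _ => True) γ.r) {g h : Equiv.Perm Q}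
    (hg : g ∈ S.disUp β) (hh : h ∈ S.disUp β) (v : Q) : γ.r (g (h v)) (h (g v)) := by
  rw [mem_disUp] at hg hh
  obtain ⟨e, he, hev⟩ := exists_disRel_apply_eq hi hsc hβ (hh.2 v)
  have hge : γ.r (g (h v)) (e (g v)) := by
    simpa [hev] using rel_conj_apply hγ hcc hg.1 he (g v)
  -- `h⁻¹ * e ∈ Dis` fixes `v` and `g v β v`, so it is `γ`-trivial at `g v`
  have hfix : γ.r ((h⁻¹ * e) (g v)) (g v) := by
    refine rel_apply_self_of_rel hcc (mul_mem (inv_mem hh.1) (S.disRel_le_dis _ he))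
      (β.symm (hg.2 v)) ?_
    rw [Equiv.Perm.mul_apply, hev, Equiv.Perm.coe_inv, Equiv.symm_apply_apply]
  have heh := S.lmlt_maps hγ (S.disRel_le_lmlt _ hh.1) _ _ hfix
  simp only [Equiv.Perm.mul_apply, Equiv.Perm.coe_inv, Equiv.apply_symm_apply] at heh
  exact γ.trans hge heh

theorem commutator_disUp_le (hi : S.Idem) (hsc : S.Superconnected) (hβ : S.IsCongruence β)
    (hγ : S.IsCongruence γ) (hcc : CC S β.r (fun _ _ => True) γ.r) :
    ⁅S.disUp β, S.disUp β⁆ ≤ S.disUp γ := by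
  rw [Subgroup.commutator_le]
  intro g hg h hh
  rw [mem_disUp] at hg hh ⊢
  refine ⟨?_, fun u => ?_⟩
  · rw [commutatorElement_def]
    exact mul_mem (mul_mem (mul_mem hg.1 hh.1) (inv_mem hg.1)) (inv_mem hh.1)
  · have := rel_apply_apply_comm hi hsc hβ hγ hcc hg hh (g⁻¹ (h⁻¹ u))
    simpa [commutatorElement_def] using this

end LeftQuasigroup

/-- a superconnected idempotent left quasigroup that is nilpotent of
length `n` has solvable displacement group of derived length at most `n`. -/
theorem stmt18 {Q : Type*} (S : LeftQuasigroup Q) (hi : S.Idem) (hsc : S.Superconnected)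
    (n : ℕ) (hn : S.NilpotentLength n) :
    derivedSeries ↥S.Dis n = ⊥ := by
  obtain ⟨c, hcong, hc0, hcentral, hcn⟩ := hn
  have hstep : ∀ k, ⁅S.disUp (c (k + 1)), S.disUp (c (k + 1))⁆ ≤ S.disUp (c k) := fun k =>
    S.commutator_disUp_le hi hsc (hcong _) (hcong _) ((hcentral k _ (hcong _)).2 le_rfl)
  have htop : S.Dis ≤ S.disUp (c n) := fun g hg =>
    LeftQuasigroup.mem_disUp.2 ⟨hg, fun _ => hcn _ _⟩
  have hbot : S.disUp (c 0) = ⊥ :=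
    (Subgroup.eq_bot_iff_forall _).2 fun g hg =>
      Equiv.ext fun x => (hc0 _ _).1 ((LeftQuasigroup.mem_disUp.1 hg).2 x)
  have hmap := map_subtype_derivedSeries_le_of_commutator_le S.Dis (fun k => S.disUp (c k))
    hstep n 0 htop
  rwa [hbot, le_bot_iff, Subgroup.map_eq_bot_iff_of_injective _ S.Dis.subtype_injective] at hmap
end
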